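/- Let C be an additive Z/2-graded category in which the product of any two degree-one morphisms is zero, and suppose for each object X the endomorphism ring of X in the degree-zero part is local. Then End_C(X) is local for each such X; in particular if the underlying degree-zero category is Krull–Remak–Schmidt, so is C, and both categories have the same indecomposable objects and the same isomorphism classes of objects. -/

import Mathlib

open CategoryTheory

universe u v w

variable {H : Type u} [Category.{v} H] [Preadditive H]
  (E : H → H → Type w) [∀ X Y : H, AddCommGroup (E X Y)]
  (push : ∀ {X Y Y' : H}, (Y ⟶ Y') → E X Y → E X Y')
  (pull : ∀ {X X' Y : H}, (X' ⟶ X) → E X Y → E X' Y)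

/-- Composition in the Z/2-graded category `C`. Degree-one morphisms square to zero. -/
def gradedComp {X Y Z : H} (f : (X ⟶ Y) × E X Y) (g : (Y ⟶ Z) × E Y Z) :
    (X ⟶ Z) × E X Z :=
  (f.1 ≫ g.1, push g.1 f.2 + pull f.1 g.2)

def IsCUnit {X Y : H} (f : (X ⟶ Y) × E X Y) : Prop :=
  ∃ g : (Y ⟶ X) × E Y X,
    gradedComp E push pull f g = ((𝟙 X, 0) : (X ⟶ X) × E X X) ∧
    gradedComp E push pull g f = ((𝟙 Y, 0) : (Y ⟶ Y) × E Y Y)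

/-!
Everything is decided by degree-zero parts. If `a` is invertible in `H`, then `(a, η)` is
invertible in `C` with inverse `(a⁻¹, -a⁻¹ η a⁻¹)`: since degree-one morphisms compose to zero,
this correction term cancels the degree-one part of both composites. Hence `C` and `H` have the
same isomorphisms, and locality of `End_H(X)` passes to `End_C(X)`. An idempotent `(e, η)` of `C`
has `e` idempotent, and `e = 0` resp. `e = 1` forces `η = 0 + 0` resp. `η = η + η`, so `η = 0`.
-/

theorem map_zero_of_map_add {A B : Type*} [AddGroup A] [AddGroup B] (f : A → B)
    (hf : ∀ x y, f (x + y) = f x + f y) : f 0 = 0 :=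
  map_zero (AddMonoidHom.mk' f hf)

theorem map_neg_of_map_add {A B : Type*} [AddGroup A] [AddGroup B] (f : A → B)
    (hf : ∀ x y, f (x + y) = f x + f y) (x : A) : f (-x) = -f x :=
  map_neg (AddMonoidHom.mk' f hf) x

section

variable {H : Type u} [Category.{v} H]
  (E : H → H → Type w) [∀ X Y : H, AddCommGroup (E X Y)]
  (push : ∀ {X Y Y' : H}, (Y ⟶ Y') → E X Y → E X Y')
  (pull : ∀ {X X' Y : H}, (X' ⟶ X) → E X Y → E X' Y)

theorem isIso_fst_of_isCUnit {X Y : H} {f : (X ⟶ Y) × E X Y} (hf : IsCUnit E push pull f) :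
    IsIso f.1 :=
  let ⟨g, hfg, hgf⟩ := hf
  ⟨g.1, congrArg Prod.fst hfg, congrArg Prod.fst hgf⟩

theorem isCUnit_of_isIso_fst
    (push_id : ∀ {X Y : H} (η : E X Y), push (𝟙 Y) η = η)
    (push_comp : ∀ {X Y Y' Y'' : H} (g : Y ⟶ Y') (g' : Y' ⟶ Y'') (η : E X Y),
      push (g ≫ g') η = push g' (push g η))
    (pull_id : ∀ {X Y : H} (η : E X Y), pull (𝟙 X) η = η)
    (pull_comp : ∀ {X X' X'' Y : H} (f : X' ⟶ X) (f' : X'' ⟶ X') (η : E X Y),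
      pull (f' ≫ f) η = pull f' (pull f η))
    (push_pull : ∀ {X X' Y Y' : H} (f : X' ⟶ X) (g : Y ⟶ Y') (η : E X Y),
      push g (pull f η) = pull f (push g η))
    (push_add : ∀ {X Y Y' : H} (g : Y ⟶ Y') (η θ : E X Y),
      push g (η + θ) = push g η + push g θ)
    (pull_add : ∀ {X X' Y : H} (f : X' ⟶ X) (η θ : E X Y),
      pull f (η + θ) = pull f η + pull f θ)
    {X Y : H} (f : (X ⟶ Y) × E X Y) [IsIso f.1] : IsCUnit E push pull f := by
  obtain ⟨a, η⟩ := f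
  refine ⟨(inv a, -pull (inv a) (push (inv a) η)),
    Prod.ext (IsIso.hom_inv_id a) ?_, Prod.ext (IsIso.inv_hom_id a) ?_⟩
  · change push (inv a) η + pull a (-pull (inv a) (push (inv a) η)) = 0
    rw [map_neg_of_map_add _ (pull_add a), ← pull_comp, IsIso.hom_inv_id, pull_id,
      add_neg_cancel]
  · change push a (-pull (inv a) (push (inv a) η)) + pull (inv a) η = 0
    rw [map_neg_of_map_add _ (push_add a), push_pull, ← push_comp, IsIso.inv_hom_id, push_id,
      neg_add_cancel]

theorem isCUnit_iff_isIso_fst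
    (push_id : ∀ {X Y : H} (η : E X Y), push (𝟙 Y) η = η)
    (push_comp : ∀ {X Y Y' Y'' : H} (g : Y ⟶ Y') (g' : Y' ⟶ Y'') (η : E X Y),
      push (g ≫ g') η = push g' (push g η))
    (pull_id : ∀ {X Y : H} (η : E X Y), pull (𝟙 X) η = η)
    (pull_comp : ∀ {X X' X'' Y : H} (f : X' ⟶ X) (f' : X'' ⟶ X') (η : E X Y),
      pull (f' ≫ f) η = pull f' (pull f η))
    (push_pull : ∀ {X X' Y Y' : H} (f : X' ⟶ X) (g : Y ⟶ Y') (η : E X Y),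
      push g (pull f η) = pull f (push g η))
    (push_add : ∀ {X Y Y' : H} (g : Y ⟶ Y') (η θ : E X Y),
      push g (η + θ) = push g η + push g θ)
    (pull_add : ∀ {X X' Y : H} (f : X' ⟶ X) (η θ : E X Y),
      pull f (η + θ) = pull f η + pull f θ)
    {X Y : H} (f : (X ⟶ Y) × E X Y) : IsCUnit E push pull f ↔ IsIso f.1 :=
  ⟨isIso_fst_of_isCUnit E push pull, fun _ =>
    isCUnit_of_isIso_fst E push pull push_id push_comp pull_id pull_comp push_pull push_add
      pull_add f⟩

theorem gradedComp_mk_zero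
    (push_add : ∀ {X Y Y' : H} (g : Y ⟶ Y') (η θ : E X Y),
      push g (η + θ) = push g η + push g θ)
    (pull_add : ∀ {X X' Y : H} (f : X' ⟶ X) (η θ : E X Y),
      pull f (η + θ) = pull f η + pull f θ)
    {X Y Z : H} (f : X ⟶ Y) (g : Y ⟶ Z) :
    gradedComp E push pull (f, 0) (g, 0) = (f ≫ g, 0) := by
  change (f ≫ g, push g 0 + pull f 0) = (f ≫ g, 0)
  rw [map_zero_of_map_add _ (push_add g), map_zero_of_map_add _ (pull_add f), add_zero]

theorem snd_eq_zero_of_gradedComp_self_eq_self [Preadditive H]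
    (push_id : ∀ {X Y : H} (η : E X Y), push (𝟙 Y) η = η)
    (pull_id : ∀ {X Y : H} (η : E X Y), pull (𝟙 X) η = η)
    (push_zero : ∀ {X Y Y' : H} (η : E X Y), push (0 : Y ⟶ Y') η = 0)
    (pull_zero : ∀ {X X' Y : H} (η : E X Y), pull (0 : X' ⟶ X) η = 0)
    {X : H} {e : (X ⟶ X) × E X X} (he : gradedComp E push pull e e = e)
    (htriv : e.1 = 0 ∨ e.1 = 𝟙 X) : e.2 = 0 := by
  have hsnd : push e.1 e.2 + pull e.1 e.2 = e.2 := congrArg Prod.snd he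
  rcases htriv with h | h
  · rwa [h, push_zero, pull_zero, zero_add, eq_comm] at hsnd
  · rwa [h, push_id, pull_id, add_eq_right] at hsnd

theorem trivial_idempotents_iff [Preadditive H]
    (push_id : ∀ {X Y : H} (η : E X Y), push (𝟙 Y) η = η)
    (pull_id : ∀ {X Y : H} (η : E X Y), pull (𝟙 X) η = η)
    (push_add : ∀ {X Y Y' : H} (g : Y ⟶ Y') (η θ : E X Y),
      push g (η + θ) = push g η + push g θ)
    (pull_add : ∀ {X X' Y : H} (f : X' ⟶ X) (η θ : E X Y),
      pull f (η + θ) = pull f η + pull f θ)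
    (push_zero : ∀ {X Y Y' : H} (η : E X Y), push (0 : Y ⟶ Y') η = 0)
    (pull_zero : ∀ {X X' Y : H} (η : E X Y), pull (0 : X' ⟶ X) η = 0)
    (X : H) :
    (∀ e : X ⟶ X, e ≫ e = e → e = 0 ∨ e = 𝟙 X) ↔
      (∀ e : (X ⟶ X) × E X X, gradedComp E push pull e e = e →
        e = 0 ∨ e = ((𝟙 X, 0) : (X ⟶ X) × E X X)) := by
  constructor
  · intro hH e he
    have hfst : e.1 = 0 ∨ e.1 = 𝟙 X := hH e.1 (congrArg Prod.fst he)
    have hsnd : e.2 = 0 :=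
      snd_eq_zero_of_gradedComp_self_eq_self E push pull push_id pull_id push_zero pull_zero he
        hfst
    exact hfst.imp (Prod.ext · hsnd) (Prod.ext · hsnd)
  · intro hC e he
    have hmk : gradedComp E push pull (e, 0) (e, 0) = (e, 0) := by
      rw [gradedComp_mk_zero E push pull push_add pull_add, he]
    exact (hC (e, 0) hmk).imp (congrArg Prod.fst) (congrArg Prod.fst)

end

theorem graded_category_local_KRS_same_indecomposables
    (push_id : ∀ {X Y : H} (η : E X Y), push (𝟙 Y) η = η)
    (push_comp : ∀ {X Y Y' Y'' : H} (g : Y ⟶ Y') (g' : Y' ⟶ Y'') (η : E X Y),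
      push (g ≫ g') η = push g' (push g η))
    (pull_id : ∀ {X Y : H} (η : E X Y), pull (𝟙 X) η = η)
    (pull_comp : ∀ {X X' X'' Y : H} (f : X' ⟶ X) (f' : X'' ⟶ X') (η : E X Y),
      pull (f' ≫ f) η = pull f' (pull f η))
    (push_pull : ∀ {X X' Y Y' : H} (f : X' ⟶ X) (g : Y ⟶ Y') (η : E X Y),
      push g (pull f η) = pull f (push g η))
    (push_add : ∀ {X Y Y' : H} (g : Y ⟶ Y') (η θ : E X Y),
      push g (η + θ) = push g η + push g θ)
    (pull_add : ∀ {X X' Y : H} (f : X' ⟶ X) (η θ : E X Y),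
      pull f (η + θ) = pull f η + pull f θ)
    (push_zero : ∀ {X Y Y' : H} (η : E X Y), push (0 : Y ⟶ Y') η = 0)
    (pull_zero : ∀ {X X' Y : H} (η : E X Y), pull (0 : X' ⟶ X) η = 0)
    -- the endomorphism ring of each object in the degree-zero part is local
    (hloc : ∀ X : H, IsLocalRing (End X)) :
    -- (1) the endomorphism ring of each object of C is local:
    -- the identity is not 0, and for every endomorphism f of X in C,
    -- f or (𝟙 X + 0) - f is a unit
    (∀ X : H, ((𝟙 X, 0) : (X ⟶ X) × E X X) ≠ 0 ∧
      ∀ f : (X ⟶ X) × E X X,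
        IsCUnit E push pull f ∨
        IsCUnit E push pull (((𝟙 X, 0) : (X ⟶ X) × E X X) - f)) ∧
    -- (2) C and H have the same isomorphism classes of objects
    (∀ X Y : H, Nonempty (X ≅ Y) ↔
      ∃ f : (X ⟶ Y) × E X Y, IsCUnit E push pull f) ∧
    -- (3) C and H have the same indecomposable objects: X has only trivial
    -- idempotent endomorphisms in H iff it has only trivial idempotents in C
    (∀ X : H,
      (∀ e : X ⟶ X, e ≫ e = e → e = 0 ∨ e = 𝟙 X) ↔
      (∀ e : (X ⟶ X) × E X X, gradedComp E push pull e e = e →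
        e = 0 ∨ e = ((𝟙 X, 0) : (X ⟶ X) × E X X))) := by
  have isCUnit_iff {X Y : H} (f : (X ⟶ Y) × E X Y) : IsCUnit E push pull f ↔ IsIso f.1 :=
    isCUnit_iff_isIso_fst E push pull push_id push_comp pull_id pull_comp push_pull push_add
      pull_add f
  refine ⟨fun X => ⟨fun h => ?_, fun f => ?_⟩, fun X Y => ?_,
    trivial_idempotents_iff E push pull push_id pull_id push_add pull_add push_zero pull_zero⟩
  · exact one_ne_zero (α := End X) (congrArg Prod.fst h)
  · rw [isCUnit_iff, isCUnit_iff, ← isUnit_iff_isIso, ← isUnit_iff_isIso]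
    exact IsLocalRing.isUnit_or_isUnit_of_add_one (add_sub_cancel (f.1 : End X) (1 : End X))
  · simp only [isCUnit_iff]
    exact ⟨fun ⟨i⟩ => ⟨(i.hom, 0), inferInstanceAs (IsIso i.hom)⟩,
      fun ⟨f, _⟩ => ⟨asIso f.1⟩⟩
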